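/- Let u, v : ℝ × ℝ → ℝ be smooth (C^∞) functions of (t, x) and let a, b, c, ε, κ, λ, σ be real constants with a = b and κ = 0. If (u, v) solves the BBM-KdV system, then the vector with components C^t = (a·u + 2c)·u − a·ε·u_x² and C^x = 2·(a·u + c)·((a·u + c)·v + ε·u_tx) satisfies the conservation law ∂_t C^t + ∂_x C^x = 0 at every point (t, x). -/

import Mathlib

open Real

noncomputable def pt (f : ℝ × ℝ → ℝ) : ℝ × ℝ → ℝ :=
  fun p => deriv (fun s => f (s, p.2)) p.1

noncomputable def px (f : ℝ × ℝ → ℝ) : ℝ × ℝ → ℝ :=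
  fun p => deriv (fun s => f (p.1, s)) p.2

/-- The BBM-KdV system: F1 = 0 and F2 = 0 everywhere. -/
def BBMKdV (a b c ε κ lam σ : ℝ) (u v : ℝ × ℝ → ℝ) : Prop :=
  (∀ p : ℝ × ℝ, pt u p + (a + b) * v p * px u p + (a * u p + c) * px v p
      + ε * px (px (pt u)) p + κ * px (px (px v)) p = 0) ∧
  (∀ p : ℝ × ℝ, pt v p + (b * u p + c) * px u p + (a + b) * v p * px v p
      + lam * px (px (px u)) p + σ * px (px (pt v)) p = 0)

lemma hasDerivAt_slice_t {f : ℝ × ℝ → ℝ} (hf : Differentiable ℝ f) (p : ℝ × ℝ) :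
    HasDerivAt (fun s => f (s, p.2)) (fderiv ℝ f p ((1:ℝ), (0:ℝ))) p.1 := by
  have h : HasDerivAt (fun s : ℝ => (s, p.2)) ((1:ℝ), (0:ℝ)) p.1 :=
    HasDerivAt.prodMk (hasDerivAt_id p.1) (hasDerivAt_const p.1 p.2)
  have := (hf (p.1, p.2)).hasFDerivAt.comp_hasDerivAt p.1 h
  exact this

lemma hasDerivAt_slice_x {f : ℝ × ℝ → ℝ} (hf : Differentiable ℝ f) (p : ℝ × ℝ) :
    HasDerivAt (fun s => f (p.1, s)) (fderiv ℝ f p ((0:ℝ), (1:ℝ))) p.2 := by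
  have h : HasDerivAt (fun s : ℝ => (p.1, s)) ((0:ℝ), (1:ℝ)) p.2 :=
    HasDerivAt.prodMk (hasDerivAt_const p.2 p.1) (hasDerivAt_id p.2)
  have := (hf (p.1, p.2)).hasFDerivAt.comp_hasDerivAt p.2 h
  exact this

lemma pt_apply {f : ℝ × ℝ → ℝ} (hf : Differentiable ℝ f) (p : ℝ × ℝ) :
    pt f p = fderiv ℝ f p ((1:ℝ), (0:ℝ)) := (hasDerivAt_slice_t hf p).deriv

lemma px_apply {f : ℝ × ℝ → ℝ} (hf : Differentiable ℝ f) (p : ℝ × ℝ) :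
    px f p = fderiv ℝ f p ((0:ℝ), (1:ℝ)) := (hasDerivAt_slice_x hf p).deriv

lemma hasDerivAt_pt {f : ℝ × ℝ → ℝ} (hf : Differentiable ℝ f) (p : ℝ × ℝ) :
    HasDerivAt (fun s => f (s, p.2)) (pt f p) p.1 := by
  rw [pt_apply hf]; exact hasDerivAt_slice_t hf p

lemma hasDerivAt_px {f : ℝ × ℝ → ℝ} (hf : Differentiable ℝ f) (p : ℝ × ℝ) :
    HasDerivAt (fun s => f (p.1, s)) (px f p) p.2 := by
  rw [px_apply hf]; exact hasDerivAt_slice_x hf p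

lemma contDiff_pt {f : ℝ × ℝ → ℝ} (hf : ContDiff ℝ (⊤ : ℕ∞) f) : ContDiff ℝ (⊤ : ℕ∞) (pt f) := by
  have : pt f = fun p => fderiv ℝ f p ((1:ℝ), (0:ℝ)) := by
    funext p; exact pt_apply (hf.differentiable (by simp)) p
  rw [this]
  exact (hf.fderiv_right (by simp)).clm_apply contDiff_const

lemma contDiff_px {f : ℝ × ℝ → ℝ} (hf : ContDiff ℝ (⊤ : ℕ∞) f) : ContDiff ℝ (⊤ : ℕ∞) (px f) := by
  have : px f = fun p => fderiv ℝ f p ((0:ℝ), (1:ℝ)) := by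
    funext p; exact px_apply (hf.differentiable (by simp)) p
  rw [this]
  exact (hf.fderiv_right (by simp)).clm_apply contDiff_const

lemma pt_px_comm {f : ℝ × ℝ → ℝ} (hf : ContDiff ℝ (⊤ : ℕ∞) f) (p : ℝ × ℝ) :
    pt (px f) p = px (pt f) p := by
  have hd : Differentiable ℝ f := hf.differentiable (by simp)
  have hf' : ContDiff ℝ (⊤ : ℕ∞) (fderiv ℝ f) := hf.fderiv_right (by simp)
  have h2 : HasFDerivAt (fderiv ℝ f) (fderiv ℝ (fderiv ℝ f) p) p :=
    ((hf'.differentiable (by simp)) p).hasFDerivAt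
  have hsymm := second_derivative_symmetric (fun q => (hd q).hasFDerivAt) h2
  have epx : px f = fun q => fderiv ℝ f q ((0:ℝ), (1:ℝ)) := by
    funext q; exact px_apply hd q
  have ept : pt f = fun q => fderiv ℝ f q ((1:ℝ), (0:ℝ)) := by
    funext q; exact pt_apply hd q
  have hApx : HasFDerivAt (fun q => fderiv ℝ f q ((0:ℝ), (1:ℝ)))
      ((ContinuousLinearMap.apply ℝ ℝ ((0:ℝ), (1:ℝ))).comp (fderiv ℝ (fderiv ℝ f) p)) p :=
    (ContinuousLinearMap.apply ℝ ℝ ((0:ℝ), (1:ℝ))).hasFDerivAt.comp p h2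
  have hApt : HasFDerivAt (fun q => fderiv ℝ f q ((1:ℝ), (0:ℝ)))
      ((ContinuousLinearMap.apply ℝ ℝ ((1:ℝ), (0:ℝ))).comp (fderiv ℝ (fderiv ℝ f) p)) p :=
    (ContinuousLinearMap.apply ℝ ℝ ((1:ℝ), (0:ℝ))).hasFDerivAt.comp p h2
  have hpxd : Differentiable ℝ (px f) := (contDiff_px hf).differentiable (by simp)
  have hptd : Differentiable ℝ (pt f) := (contDiff_pt hf).differentiable (by simp)
  have e1 : pt (px f) p = fderiv ℝ (fderiv ℝ f) p ((1:ℝ),(0:ℝ)) ((0:ℝ),(1:ℝ)) := by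
    rw [pt_apply hpxd p]
    have : fderiv ℝ (px f) p
        = (ContinuousLinearMap.apply ℝ ℝ ((0:ℝ), (1:ℝ))).comp (fderiv ℝ (fderiv ℝ f) p) := by
      rw [epx]; exact hApx.fderiv
    rw [this]; rfl
  have e2 : px (pt f) p = fderiv ℝ (fderiv ℝ f) p ((0:ℝ),(1:ℝ)) ((1:ℝ),(0:ℝ)) := by
    rw [px_apply hptd p]
    have : fderiv ℝ (pt f) p
        = (ContinuousLinearMap.apply ℝ ℝ ((1:ℝ), (0:ℝ))).comp (fderiv ℝ (fderiv ℝ f) p) := by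
      rw [ept]; exact hApt.fderiv
    rw [this]; rfl
  rw [e1, e2]; exact hsymm _ _

theorem stmt_5 (u v : ℝ × ℝ → ℝ) (hu : ContDiff ℝ (⊤ : ℕ∞) u) (hv : ContDiff ℝ (⊤ : ℕ∞) v)
    (a b c ε κ lam σ : ℝ)
    (hab : a = b) (hk : κ = 0)
    (hsol : BBMKdV a b c ε κ lam σ u v) :
    ∀ p : ℝ × ℝ,
      pt (fun q => (a * u q + 2 * c) * u q - a * ε * (px u q) ^ 2) p
      + px (fun q => 2 * (a * u q + c) * ((a * u q + c) * v q + ε * px (pt u) q)) p = 0 := by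
  subst hab hk
  intro p
  have hud : Differentiable ℝ u := hu.differentiable (by simp)
  have hvd : Differentiable ℝ v := hv.differentiable (by simp)
  have hpxu : ContDiff ℝ (⊤ : ℕ∞) (px u) := contDiff_px hu
  have hptu : ContDiff ℝ (⊤ : ℕ∞) (pt u) := contDiff_pt hu
  have hpxptu : ContDiff ℝ (⊤ : ℕ∞) (px (pt u)) := contDiff_px hptu
  -- time derivative part
  have hU := hasDerivAt_pt hud p
  have hUx := hasDerivAt_pt (hpxu.differentiable (by simp)) p
  have hA := (((hU.const_mul a).add_const (2*c)).mul hU).sub ((hUx.pow 2).const_mul (a*ε))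
  have A : pt (fun q => (a * u q + 2 * c) * u q - a * ε * (px u q) ^ 2) p
      = (a * pt u p) * u (p.1, p.2) + (a * u (p.1, p.2) + 2*c) * pt u p
        - a * ε * (↑2 * px u (p.1, p.2) ^ (2-1) * pt (px u) p) := hA.deriv
  -- space derivative part
  have hU2 := hasDerivAt_px hud p
  have hV2 := hasDerivAt_px hvd p
  have hUtx := hasDerivAt_px (hpxptu.differentiable (by simp)) p
  have hB := (((hU2.const_mul a).add_const c).const_mul 2).mul
    ((((hU2.const_mul a).add_const c).mul hV2).add (hUtx.const_mul ε))
  have B : px (fun q => 2 * (a * u q + c) * ((a * u q + c) * v q + ε * px (pt u) q)) p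
      = (2 * (a * px u p)) * ((a * u (p.1, p.2) + c) * v (p.1, p.2) + ε * px (pt u) (p.1, p.2))
        + (2 * (a * u (p.1, p.2) + c)) *
          ((a * px u p) * v (p.1, p.2) + (a * u (p.1, p.2) + c) * px v p
            + ε * px (px (pt u)) p) := hB.deriv
  have hcomm := pt_px_comm hu p
  have hF1 := hsol.1 p
  rw [A, B]
  simp only [Prod.mk.eta] at *
  rw [hcomm]
  linear_combination (2 * (a * u p + c)) * hF1
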